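/- The classical limit of the Gervais–Neveu–Felder equation is the generalized classical Yang–Baxter equation: let ε > 0, Λ ⊆ ℂ, and let R(γ,λ,x) be an End(ℂ^N⊗ℂ^N)-valued function of (γ,λ,x) ∈ (−ε,ε)×Λ×ℝ^N whose entries are twice continuously differentiable in (γ,x), with R(0,λ,x) = Id for all λ,x. Suppose that for every γ ∈ (−ε,ε), all λ_1,λ_2,λ_3 ∈ ℂ with λ_a−λ_b ∈ Λ, and all x, the Gervais–Neveu–Felder equation holds: R_{12}(λ_{12}, x+γh^{(3)}) R_{13}(λ_{13}, x−γh^{(2)}) R_{23}(λ_{23}, x+γh^{(1)}) = R_{23}(λ_{23}, x−γh^{(1)}) R_{13}(λ_{13}, x+γh^{(2)}) R_{12}(λ_{12}, x−γh^{(3)}), where λ_{ab} = λ_a−λ_b and, for a matrix-valued function S of x placed in two factors of (ℂ^N)^{⊗3}, S(x ± γh^{(c)}) acts on basis vectors carrying index k in the remaining factor c as S(x ± γδ_k), δ_k being the k-th standard basis vector of ℝ^N. Define r(λ,x) := −(1/2)·∂_γ R(γ,λ,x)|_{γ=0}. Then r satisfies the generalized classical Yang–Baxter equation: [r_{12},r_{13}]+[r_{12},r_{23}]+[r_{13},r_{23}]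 − Σ_ν (e_{νν})^{(1)} ∂_{x_ν} r_{23} + Σ_ν (e_{νν})^{(2)} ∂_{x_ν} r_{13} − Σ_ν (e_{νν})^{(3)} ∂_{x_ν} r_{12} = 0, with r_{ab} = r(λ_{ab}, x). -/

import Mathlib

/- STATEMENT 7: The classical limit of the Gervais–Neveu–Felder equation is
   the generalized classical Yang–Baxter equation: if R(γ,λ,x) is C² in (γ,x),
   equals Id at γ = 0, and satisfies the GNF equation for all small γ, then
   r(λ,x) := −(1/2)∂_γ R|_{γ=0} satisfies the generalized CYBE. -/

noncomputable section
open Matrix Complex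
open scoped Kronecker BigOperators

variable (N : ℕ)

def E (i j : Fin N) : Matrix (Fin N) (Fin N) ℂ := Matrix.single i j 1

/-- S placed in factors 1,2 of (ℂ^N)^{⊗3}, with argument dynamically shifted by s·h^{(3)}:
    on basis vectors with index k in factor 3 it acts as S(x + s·δ_k). -/
def sh12 (S : (Fin N → ℝ) → Matrix (Fin N × Fin N) (Fin N × Fin N) ℂ)
    (x : Fin N → ℝ) (s : ℝ) :
    Matrix (Fin N × Fin N × Fin N) (Fin N × Fin N × Fin N) ℂ :=
  fun p q => if p.2.2 = q.2.2 then S (x + s • (Pi.single q.2.2 1 : Fin N → ℝ)) (p.1, p.2.1) (q.1, q.2.1) else 0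

/-- S placed in factors 1,3, shifted by s·h^{(2)} -/
def sh13 (S : (Fin N → ℝ) → Matrix (Fin N × Fin N) (Fin N × Fin N) ℂ)
    (x : Fin N → ℝ) (s : ℝ) :
    Matrix (Fin N × Fin N × Fin N) (Fin N × Fin N × Fin N) ℂ :=
  fun p q => if p.2.1 = q.2.1 then S (x + s • (Pi.single q.2.1 1 : Fin N → ℝ)) (p.1, p.2.2) (q.1, q.2.2) else 0

/-- S placed in factors 2,3, shifted by s·h^{(1)} -/
def sh23 (S : (Fin N → ℝ) → Matrix (Fin N × Fin N) (Fin N × Fin N) ℂ)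
    (x : Fin N → ℝ) (s : ℝ) :
    Matrix (Fin N × Fin N × Fin N) (Fin N × Fin N × Fin N) ℂ :=
  fun p q => if p.1 = q.1 then S (x + s • (Pi.single q.1 1 : Fin N → ℝ)) (p.2.1, p.2.2) (q.2.1, q.2.2) else 0

/-- static placements of a fixed matrix in two of the three factors -/
def pl12 (A : Matrix (Fin N × Fin N) (Fin N × Fin N) ℂ) :
    Matrix (Fin N × Fin N × Fin N) (Fin N × Fin N × Fin N) ℂ :=
  fun p q => A (p.1, p.2.1) (q.1, q.2.1) * (if p.2.2 = q.2.2 then 1 else 0)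

def pl13 (A : Matrix (Fin N × Fin N) (Fin N × Fin N) ℂ) :
    Matrix (Fin N × Fin N × Fin N) (Fin N × Fin N × Fin N) ℂ :=
  fun p q => A (p.1, p.2.2) (q.1, q.2.2) * (if p.2.1 = q.2.1 then 1 else 0)

def pl23 (A : Matrix (Fin N × Fin N) (Fin N × Fin N) ℂ) :
    Matrix (Fin N × Fin N × Fin N) (Fin N × Fin N × Fin N) ℂ :=
  fun p q => A (p.2.1, p.2.2) (q.2.1, q.2.2) * (if p.1 = q.1 then 1 else 0)

def pl1 (h : Matrix (Fin N) (Fin N) ℂ) :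
    Matrix (Fin N × Fin N × Fin N) (Fin N × Fin N × Fin N) ℂ :=
  fun p q => h p.1 q.1 * (if p.2.1 = q.2.1 then 1 else 0) * (if p.2.2 = q.2.2 then 1 else 0)

def pl2 (h : Matrix (Fin N) (Fin N) ℂ) :
    Matrix (Fin N × Fin N × Fin N) (Fin N × Fin N × Fin N) ℂ :=
  fun p q => h p.2.1 q.2.1 * (if p.1 = q.1 then 1 else 0) * (if p.2.2 = q.2.2 then 1 else 0)

def pl3 (h : Matrix (Fin N) (Fin N) ℂ) :
    Matrix (Fin N × Fin N × Fin N) (Fin N × Fin N × Fin N) ℂ :=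
  fun p q => h p.2.2 q.2.2 * (if p.1 = q.1 then 1 else 0) * (if p.2.1 = q.2.1 then 1 else 0)

/-- entrywise real partial derivative ∂_{x_ν} -/
def pderivMat {α : Type} (ν : Fin N)
    (f : (Fin N → ℝ) → Matrix α α ℂ) (x : Fin N → ℝ) : Matrix α α ℂ :=
  fun p q => deriv (fun t : ℝ => f (Function.update x ν t) p q) (x ν)

def mcomm {α : Type} [Fintype α] [DecidableEq α] (A B : Matrix α α ℂ) : Matrix α α ℂ :=
  A * B - B * A

/-- the classical limit r(λ,x) := −(1/2)·∂_γ R(γ,λ,x)|_{γ=0} -/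
def rLimit (R : ℝ → ℂ → (Fin N → ℝ) → Matrix (Fin N × Fin N) (Fin N × Fin N) ℂ)
    (lam : ℂ) (x : Fin N → ℝ) : Matrix (Fin N × Fin N) (Fin N × Fin N) ℂ :=
  Matrix.of fun p q => -(1/2 : ℂ) * deriv (fun γ : ℝ => R γ lam x p q) 0


/-!
Differentiate both sides of the GNF equation twice in `γ` at `γ = 0`. Every factor equals `1`
there, so the second derivative of a triple product is the sum of the second derivatives of the
factors plus twice the pairwise products of their first derivatives `∂_γ R(0) = -2 r`. By the
chain rule the second derivative of `R(γ, x ± γ δ_k)` is `∂²_γ R ± 2 ∂_{x_k} ∂_γ R`; there is no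
`∂²_{x_k} R` term because `R(0, ·)` is constant. The two sides carry the same `∂²_γ R` terms but
opposite shifts, so their difference is `8` times the generalized classical Yang–Baxter
expression.
-/

open Filter Topology

section SecondOrder

variable {E : Type*} [NormedAddCommGroup E] [NormedSpace ℝ E]

def HasSecondOrderDerivAt (f : ℝ → E) (f₁ f₂ : E) (x : ℝ) : Prop :=
  (∀ᶠ y in 𝓝 x, DifferentiableAt ℝ f y) ∧ HasDerivAt f f₁ x ∧ HasDerivAt (deriv f) f₂ x

namespace HasSecondOrderDerivAt

variable {f g : ℝ → E} {f₁ f₂ g₁ g₂ : E} {x : ℝ}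

lemma of_eventually {f' : ℝ → E} (hf : ∀ᶠ y in 𝓝 x, HasDerivAt f (f' y) y)
    (hf' : HasDerivAt f' f₂ x) (hx : f' x = f₁) : HasSecondOrderDerivAt f f₁ f₂ x :=
  ⟨hf.mono fun _ h => h.differentiableAt, hx ▸ hf.self_of_nhds,
    hf'.congr_of_eventuallyEq (hf.mono fun _ h => h.deriv)⟩

lemma eventually_hasDerivAt (hf : HasSecondOrderDerivAt f f₁ f₂ x) :
    ∀ᶠ y in 𝓝 x, HasDerivAt f (deriv f y) y :=
  hf.1.mono fun _ h => h.hasDerivAt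

lemma const (c : E) : HasSecondOrderDerivAt (fun _ => c) 0 0 x :=
  of_eventually (Eventually.of_forall fun y => hasDerivAt_const y c) (hasDerivAt_const x 0) rfl

lemma unique (hf : HasSecondOrderDerivAt f f₁ f₂ x) (hg : HasSecondOrderDerivAt g g₁ g₂ x)
    (hfg : f =ᶠ[𝓝 x] g) : f₁ = g₁ ∧ f₂ = g₂ :=
  ⟨hf.2.1.unique (hg.2.1.congr_of_eventuallyEq hfg),
    hf.2.2.unique (hg.2.2.congr_of_eventuallyEq hfg.deriv)⟩

lemma sum {ι : Type*} (s : Finset ι) {f : ι → ℝ → E} {f₁ f₂ : ι → E}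
    (hf : ∀ i ∈ s, HasSecondOrderDerivAt (f i) (f₁ i) (f₂ i) x) :
    HasSecondOrderDerivAt (fun y => ∑ i ∈ s, f i y) (∑ i ∈ s, f₁ i) (∑ i ∈ s, f₂ i) x :=
  of_eventually (f' := fun y => ∑ i ∈ s, deriv (f i) y)
    ((s.eventually_all.2 fun i hi => (hf i hi).eventually_hasDerivAt).mono
      fun _ hy => HasDerivAt.fun_sum hy)
    (HasDerivAt.fun_sum fun i hi => (hf i hi).2.2)
    (Finset.sum_congr rfl fun i hi => (hf i hi).2.1.deriv)

lemma mul {𝔸 : Type*} [NormedRing 𝔸] [NormedAlgebra ℝ 𝔸] {f g : ℝ → 𝔸} {f₁ f₂ g₁ g₂ : 𝔸}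
    (hf : HasSecondOrderDerivAt f f₁ f₂ x) (hg : HasSecondOrderDerivAt g g₁ g₂ x) :
    HasSecondOrderDerivAt (fun y => f y * g y) (f₁ * g x + f x * g₁)
      (f₂ * g x + 2 * (f₁ * g₁) + f x * g₂) x := by
  refine of_eventually (f' := fun y => deriv f y * g y + f y * deriv g y)
    ((hf.eventually_hasDerivAt.and hg.eventually_hasDerivAt).mono fun _ hy => hy.1.mul hy.2)
    ?_ (by rw [hf.2.1.deriv, hg.2.1.deriv])
  convert (hf.2.2.fun_mul hg.2.1).fun_add (hf.2.1.fun_mul hg.2.2) using 1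
  rw [hf.2.1.deriv, hg.2.1.deriv]
  noncomm_ring

end HasSecondOrderDerivAt

variable {G : Type*} [NormedAddCommGroup G] [NormedSpace ℝ G]

lemma hasSecondOrderDerivAt_comp_line {F : E → G} {z : E} (hF : ContDiffAt ℝ 2 F z) (w : E) :
    HasSecondOrderDerivAt (fun t : ℝ => F (z + t • w)) (fderiv ℝ F z w)
      (fderiv ℝ (fderiv ℝ F) z w w) 0 := by
  have hline : ∀ t : ℝ, HasDerivAt (fun t : ℝ => z + t • w) w t := fun t => by
    simpa using ((hasDerivAt_id t).smul_const w).const_add z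
  have hline0 : Tendsto (fun t : ℝ => z + t • w) (𝓝 0) (𝓝 z) := by
    simpa using (hline 0).continuousAt.tendsto
  have hdiff : ∀ᶠ y in 𝓝 z, DifferentiableAt ℝ F y :=
    (hF.eventually (by simp)).mono fun y hy => hy.differentiableAt two_ne_zero
  have hF' : HasFDerivAt (fderiv ℝ F) (fderiv ℝ (fderiv ℝ F) z) (z + (0 : ℝ) • w) := by
    rw [zero_smul, add_zero]
    exact ((hF.fderiv_right (m := 1) (by norm_num)).differentiableAt one_ne_zero).hasFDerivAt
  refine .of_eventually (f' := fun t => fderiv ℝ F (z + t • w) w)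
    ((hline0.eventually hdiff).mono fun t ht => ht.hasFDerivAt.comp_hasDerivAt t (hline t))
    ?_ (by simp)
  have hc : HasDerivAt (fun t : ℝ => fderiv ℝ F (z + t • w)) (fderiv ℝ (fderiv ℝ F) z w) 0 :=
    hF'.comp_hasDerivAt (0 : ℝ) (hline 0)
  simpa using hc.clm_apply (hasDerivAt_const (0 : ℝ) w)

/-- Since `F (0, ·)` is constant, the second derivative along `(0, v)` vanishes, so only the pure
`γ`-part and (by symmetry of the second derivative) twice the mixed part survive. -/
lemma hasSecondOrderDerivAt_shift {F : ℝ × E → G} {x : E} (hF : ContDiffAt ℝ 2 F (0, x))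
    (hconst : ∀ y, F (0, y) = F (0, x)) (s : ℝ) (v : E) :
    HasSecondOrderDerivAt (fun γ => F (γ, x + (s * γ) • v)) (fderiv ℝ F (0, x) (1, 0))
      (fderiv ℝ (fderiv ℝ F) (0, x) (1, 0) (1, 0) +
        (2 * s) • fderiv ℝ (fderiv ℝ F) (0, x) (0, v) (1, 0)) 0 := by
  obtain ⟨hD, hD2⟩ := (hasSecondOrderDerivAt_comp_line hF (0, v)).unique
    (HasSecondOrderDerivAt.const (F (0, x))) (Eventually.of_forall fun t => by simp [hconst])
  have hsymm := hF.isSymmSndFDerivAt (by simp)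
  have hw : ((1 : ℝ), s • v) = (1, 0) + s • (0, v) := by simp
  convert hasSecondOrderDerivAt_comp_line hF (1, s • v) using 1
  · ext γ
    simp [mul_smul, smul_comm s γ v]
  · simp only [hw, map_add, map_smul, hD, smul_zero, add_zero]
  · simp only [hw, map_add, map_smul, _root_.add_apply, _root_.smul_apply, hD2,
      hsymm (1, 0) (0, v)]
    module

lemma fderiv_apply_one_zero {F : ℝ × E → G} {y : E} (hF : DifferentiableAt ℝ F (0, y)) :
    fderiv ℝ F (0, y) (1, 0) = deriv (fun γ => F (γ, y)) 0 :=
  (hF.hasFDerivAt.comp_hasDerivAt (0 : ℝ)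
    ((hasDerivAt_id (0 : ℝ)).prodMk (hasDerivAt_const (0 : ℝ) y))).deriv.symm

lemma fderiv_fderiv_apply_single_one_zero {ι : Type*} [Fintype ι] [DecidableEq ι]
    {F : ℝ × (ι → ℝ) → G} (hF : ∀ y, ContDiffAt ℝ 2 F (0, y)) (x : ι → ℝ) (k : ι) :
    fderiv ℝ (fderiv ℝ F) (0, x) (0, Pi.single k 1) (1, 0) =
      deriv (fun t => deriv (fun γ => F (γ, Function.update x k t)) 0) (x k) := by
  have hF' : HasFDerivAt (fderiv ℝ F) (fderiv ℝ (fderiv ℝ F) (0, x))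
      (0, Function.update x k (x k)) := by
    rw [Function.update_eq_self]
    exact (((hF x).fderiv_right (m := 1) (by norm_num)).differentiableAt one_ne_zero).hasFDerivAt
  have hc : HasDerivAt (fun t => fderiv ℝ F (0, Function.update x k t))
      (fderiv ℝ (fderiv ℝ F) (0, x) (0, Pi.single k 1)) (x k) :=
    hF'.comp_hasDerivAt (x k)
      ((hasDerivAt_const (x k) (0 : ℝ)).prodMk (hasDerivAt_update x k (x k)))
  simp_rw [← fderiv_apply_one_zero ((hF _).differentiableAt two_ne_zero)]
  exact ((hc.clm_apply (hasDerivAt_const (x k) ((1 : ℝ), (0 : ι → ℝ)))).deriv.trans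
    (by simp)).symm

end SecondOrder

section Entrywise

variable {l m n : Type*} {𝔸 : Type*} [NormedRing 𝔸] [NormedAlgebra ℝ 𝔸]

def HasEntrywiseSecondOrderDerivAt (A : ℝ → Matrix m n 𝔸) (A₁ A₂ : Matrix m n 𝔸) (x : ℝ) :
    Prop :=
  ∀ i j, HasSecondOrderDerivAt (fun t => A t i j) (A₁ i j) (A₂ i j) x

namespace HasEntrywiseSecondOrderDerivAt

variable {x : ℝ}

lemma reindex {A : ℝ → Matrix m n 𝔸} {A₁ A₂ : Matrix m n 𝔸}
    (hA : HasEntrywiseSecondOrderDerivAt A A₁ A₂ x) {l' : Type*} (e₁ : m ≃ l) (e₂ : n ≃ l') :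
    HasEntrywiseSecondOrderDerivAt (fun t => Matrix.reindex e₁ e₂ (A t))
      (Matrix.reindex e₁ e₂ A₁) (Matrix.reindex e₁ e₂ A₂) x :=
  fun i j => hA (e₁.symm i) (e₂.symm j)

lemma snd_unique {A B : ℝ → Matrix m n 𝔸} {A₁ A₂ B₁ B₂ : Matrix m n 𝔸}
    (hA : HasEntrywiseSecondOrderDerivAt A A₁ A₂ x) (hB : HasEntrywiseSecondOrderDerivAt B B₁ B₂ x)
    (hAB : A =ᶠ[𝓝 x] B) : A₂ = B₂ :=
  Matrix.ext fun i j => ((hA i j).unique (hB i j) (hAB.mono fun _ h => congrArg (· i j) h)).2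

lemma mul [Fintype m] {A : ℝ → Matrix l m 𝔸} {B : ℝ → Matrix m n 𝔸} {A₁ A₂ : Matrix l m 𝔸}
    {B₁ B₂ : Matrix m n 𝔸} (hA : HasEntrywiseSecondOrderDerivAt A A₁ A₂ x)
    (hB : HasEntrywiseSecondOrderDerivAt B B₁ B₂ x) :
    HasEntrywiseSecondOrderDerivAt (fun t => A t * B t) (A₁ * B x + A x * B₁)
      (A₂ * B x + 2 • (A₁ * B₁) + A x * B₂) x := by
  intro i j
  simpa [Matrix.mul_apply, Finset.sum_add_distrib, Finset.mul_sum, nsmul_eq_mul] using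
    HasSecondOrderDerivAt.sum Finset.univ fun k _ => (hA i k).mul (hB k j)

lemma mul_mul_of_eq_one [Fintype m] [DecidableEq m] {A B C : ℝ → Matrix m m 𝔸}
    {A₁ A₂ B₁ B₂ C₁ C₂ : Matrix m m 𝔸} (hA : HasEntrywiseSecondOrderDerivAt A A₁ A₂ x)
    (hB : HasEntrywiseSecondOrderDerivAt B B₁ B₂ x) (hC : HasEntrywiseSecondOrderDerivAt C C₁ C₂ x)
    (hA1 : A x = 1) (hB1 : B x = 1) (hC1 : C x = 1) :
    HasEntrywiseSecondOrderDerivAt (fun t => A t * B t * C t) (A₁ + B₁ + C₁)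
      (A₂ + B₂ + C₂ + 2 • (A₁ * B₁ + A₁ * C₁ + B₁ * C₁)) x := by
  convert (hA.mul hB).mul hC using 1 <;> simp only [hA1, hB1, hC1] <;> noncomm_ring

end HasEntrywiseSecondOrderDerivAt

end Entrywise

/-- The second `γ`-derivative of the GNF equation at `0`: `a, b, c` stand for `r₁₂, r₁₃, r₂₃`
(the first derivatives are `-2 r`), `dᵢ` for `∑ ν, e_νν^{(i)} ∂_ν r_{jk}`, which enters with
coefficient `∓4` according to the sign of the shift, and the `Cᵢ` for the pure `∂²_γ R`-terms. -/
lemma gcybe_of_gnf_second_order {A : Type*} [Ring A] [Algebra ℂ A]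
    {a b c d₁ d₂ d₃ C₁ C₂ C₃ : A}
    (h : C₁ + (-4 : ℂ) • d₃ + (C₂ + (4 : ℂ) • d₂) + (C₃ + (-4 : ℂ) • d₁) +
        2 • ((-2 : ℂ) • a * ((-2 : ℂ) • b) + (-2 : ℂ) • a * ((-2 : ℂ) • c) +
          (-2 : ℂ) • b * ((-2 : ℂ) • c)) =
      C₃ + (4 : ℂ) • d₁ + (C₂ + (-4 : ℂ) • d₂) + (C₁ + (4 : ℂ) • d₃) +
        2 • ((-2 : ℂ) • c * ((-2 : ℂ) • b) + (-2 : ℂ) • c * ((-2 : ℂ) • a) +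
          (-2 : ℂ) • b * ((-2 : ℂ) • a))) :
    a * b - b * a + (a * c - c * a) + (b * c - c * b) - d₁ + d₂ - d₃ = 0 := by
  have h8 := congrArg ((8⁻¹ : ℂ) • ·) (sub_eq_zero.2 h)
  simp only [smul_zero, smul_mul_smul_comm] at h8
  rw [← h8]
  module

section Placements

variable {N}

def swap23 (α : Type*) : α × α × α ≃ α × α × α := (Equiv.refl α).prodCongr (Equiv.prodComm α α)

def rotate3 (α : Type*) : α × α × α ≃ α × α × α :=
  ((Equiv.prodComm α (α × α)).trans (Equiv.prodAssoc α α α)).symm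

/- The placements in factors `13` and `23` are conjugates of the one in factors `12` under
permutations of the tensor factors. -/
section Reindex

variable (S : (Fin N → ℝ) → Matrix (Fin N × Fin N) (Fin N × Fin N) ℂ) (x : Fin N → ℝ) (s : ℝ)
  (A : Matrix (Fin N × Fin N) (Fin N × Fin N) ℂ) (h : Matrix (Fin N) (Fin N) ℂ)

lemma sh13_eq_reindex : sh13 N S x s = reindexAlgEquiv ℂ ℂ (swap23 _) (sh12 N S x s) := rfl
lemma pl13_eq_reindex : pl13 N A = reindexAlgEquiv ℂ ℂ (swap23 _) (pl12 N A) := rfl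
lemma pl2_eq_reindex : pl2 N h = reindexAlgEquiv ℂ ℂ (swap23 _) (pl3 N h) := rfl
lemma sh23_eq_reindex : sh23 N S x s = reindexAlgEquiv ℂ ℂ (rotate3 _) (sh12 N S x s) := rfl
lemma pl23_eq_reindex : pl23 N A = reindexAlgEquiv ℂ ℂ (rotate3 _) (pl12 N A) := rfl
lemma pl1_eq_reindex : pl1 N h = reindexAlgEquiv ℂ ℂ (rotate3 _) (pl3 N h) := rfl

end Reindex

lemma pl12_smul (c : ℂ) (A : Matrix (Fin N × Fin N) (Fin N × Fin N) ℂ) :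
    pl12 N (c • A) = c • pl12 N A := by
  ext p q; simp [pl12]

lemma pl13_smul (c : ℂ) (A : Matrix (Fin N × Fin N) (Fin N × Fin N) ℂ) :
    pl13 N (c • A) = c • pl13 N A := by
  ext p q; simp [pl13]

lemma pl23_smul (c : ℂ) (A : Matrix (Fin N × Fin N) (Fin N × Fin N) ℂ) :
    pl23 N (c • A) = c • pl23 N A := by
  ext p q; simp [pl23]

lemma sum_pl3_mul_pl12_apply (M : Fin N → Matrix (Fin N × Fin N) (Fin N × Fin N) ℂ)
    (p q : Fin N × Fin N × Fin N) :
    (∑ ν, pl3 N (E N ν ν) * pl12 N (M ν)) p q =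
      if p.2.2 = q.2.2 then M q.2.2 (p.1, p.2.1) (q.1, q.2.1) else 0 := by
  obtain ⟨a, b, c⟩ := p
  obtain ⟨a', b', c'⟩ := q
  simp only [Matrix.sum_apply, Matrix.mul_apply, pl3, pl12, E, single, of_apply, ite_and, mul_ite,
    ite_mul, mul_one, mul_zero, one_mul, zero_mul, Fintype.sum_prod_type, Finset.sum_ite_eq,
    Finset.sum_ite_eq', Finset.mem_univ, ↓reduceIte]
  rcases eq_or_ne c c' with rfl | hc <;> simp [*]

section Unshifted

variable {S : (Fin N → ℝ) → Matrix (Fin N × Fin N) (Fin N × Fin N) ℂ}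

lemma sh12_eq_one (hS : ∀ y, S y = 1) (x : Fin N → ℝ) (s : ℝ) : sh12 N S x s = 1 := by
  ext p q
  rcases eq_or_ne p.2.2 q.2.2 with h | h <;> simp [sh12, hS, Matrix.one_apply, Prod.ext_iff, h]

lemma sh13_eq_one (hS : ∀ y, S y = 1) (x : Fin N → ℝ) (s : ℝ) : sh13 N S x s = 1 := by
  rw [sh13_eq_reindex, sh12_eq_one hS, map_one]

lemma sh23_eq_one (hS : ∀ y, S y = 1) (x : Fin N → ℝ) (s : ℝ) : sh23 N S x s = 1 := by
  rw [sh23_eq_reindex, sh12_eq_one hS, map_one]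

end Unshifted

section ShiftedPlacements

variable {c : ℝ → ℝ} {x : Fin N → ℝ} {S₁ C : Matrix (Fin N × Fin N) (Fin N × Fin N) ℂ}
  {D : Fin N → Matrix (Fin N × Fin N) (Fin N × Fin N) ℂ} {t : ℂ}

lemma hasEntrywiseSecondOrderDerivAt_sh12 {S : ℝ → (Fin N → ℝ) → Matrix _ _ ℂ}
    (hS : ∀ k a b, HasSecondOrderDerivAt (fun γ => S γ (x + c γ • Pi.single k 1) a b) (S₁ a b)
      (C a b + t * D k a b) 0) :
    HasEntrywiseSecondOrderDerivAt (fun γ => sh12 N (S γ) x (c γ)) (pl12 N S₁)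
      (pl12 N C + t • ∑ ν, pl3 N (E N ν ν) * pl12 N (D ν)) 0 := by
  intro p q
  simp only [Matrix.add_apply, Matrix.smul_apply, sum_pl3_mul_pl12_apply, sh12, pl12]
  split_ifs with hpq
  · simpa [hpq] using hS q.2.2 (p.1, p.2.1) (q.1, q.2.1)
  · simpa using HasSecondOrderDerivAt.const (0 : ℂ)

lemma hasEntrywiseSecondOrderDerivAt_sh13 {S : ℝ → (Fin N → ℝ) → Matrix _ _ ℂ}
    (hS : ∀ k a b, HasSecondOrderDerivAt (fun γ => S γ (x + c γ • Pi.single k 1) a b) (S₁ a b)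
      (C a b + t * D k a b) 0) :
    HasEntrywiseSecondOrderDerivAt (fun γ => sh13 N (S γ) x (c γ)) (pl13 N S₁)
      (pl13 N C + t • ∑ ν, pl2 N (E N ν ν) * pl13 N (D ν)) 0 := by
  have := (hasEntrywiseSecondOrderDerivAt_sh12 hS).reindex (swap23 _) (swap23 _)
  simp only [← coe_reindexAlgEquiv ℂ ℂ] at this
  simpa only [sh13_eq_reindex, pl13_eq_reindex, pl2_eq_reindex, map_add, map_smul, map_sum,
    map_mul] using this

lemma hasEntrywiseSecondOrderDerivAt_sh23 {S : ℝ → (Fin N → ℝ) → Matrix _ _ ℂ}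
    (hS : ∀ k a b, HasSecondOrderDerivAt (fun γ => S γ (x + c γ • Pi.single k 1) a b) (S₁ a b)
      (C a b + t * D k a b) 0) :
    HasEntrywiseSecondOrderDerivAt (fun γ => sh23 N (S γ) x (c γ)) (pl23 N S₁)
      (pl23 N C + t • ∑ ν, pl1 N (E N ν ν) * pl23 N (D ν)) 0 := by
  have := (hasEntrywiseSecondOrderDerivAt_sh12 hS).reindex (rotate3 _) (rotate3 _)
  simp only [← coe_reindexAlgEquiv ℂ ℂ] at this
  simpa only [sh23_eq_reindex, pl23_eq_reindex, pl1_eq_reindex, map_add, map_smul, map_sum,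
    map_mul] using this

end ShiftedPlacements

lemma exists_hasSecondOrderDerivAt_shift_rLimit
    {R : ℝ → ℂ → (Fin N → ℝ) → Matrix (Fin N × Fin N) (Fin N × Fin N) ℂ} {lam : ℂ}
    (hR : ∀ a b y, ContDiffAt ℝ 2 (fun z : ℝ × (Fin N → ℝ) => R z.1 lam z.2 a b) (0, y))
    (hR₀ : ∀ y, R 0 lam y = 1) (x : Fin N → ℝ) :
    ∃ C : Matrix (Fin N × Fin N) (Fin N × Fin N) ℂ, ∀ (s : ℝ) k a b,
      HasSecondOrderDerivAt (fun γ => R γ lam (x + (s * γ) • Pi.single k 1) a b)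
        (((-2 : ℂ) • rLimit N R lam x) a b)
        (C a b + (-4 * s : ℂ) * pderivMat N k (rLimit N R lam) x a b) 0 := by
  refine ⟨Matrix.of fun a b => fderiv ℝ (fderiv ℝ fun z : ℝ × (Fin N → ℝ) => R z.1 lam z.2 a b)
    (0, x) (1, 0) (1, 0), fun s k a b => ?_⟩
  have := hasSecondOrderDerivAt_shift (hR a b x) (fun y => by simp [hR₀]) s (Pi.single k 1)
  rw [fderiv_apply_one_zero ((hR a b x).differentiableAt two_ne_zero),
    fderiv_fderiv_apply_single_one_zero (hR a b)] at this
  convert this using 1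
  · simp [rLimit]
  · simp only [pderivMat, rLimit, of_apply, deriv_const_mul_field, real_smul, ofReal_mul,
      ofReal_ofNat]
    ring

end Placements

theorem classical_limit_GNF_is_GCYBE
    (ε : ℝ) (hε : 0 < ε) (Λ : Set ℂ)
    (R : ℝ → ℂ → (Fin N → ℝ) → Matrix (Fin N × Fin N) (Fin N × Fin N) ℂ)
    (hC2 : ∀ lam ∈ Λ, ∀ p q : Fin N × Fin N,
      ContDiffOn ℝ 2 (fun y : ℝ × (Fin N → ℝ) => R y.1 lam y.2 p q)
        (Set.Ioo (-ε) ε ×ˢ (Set.univ : Set (Fin N → ℝ))))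
    (hId : ∀ lam ∈ Λ, ∀ x : Fin N → ℝ, R 0 lam x = 1)
    (hGNF : ∀ γ ∈ Set.Ioo (-ε) ε, ∀ lam₁ lam₂ lam₃ : ℂ,
      lam₁ - lam₂ ∈ Λ → lam₁ - lam₃ ∈ Λ → lam₂ - lam₃ ∈ Λ → ∀ x : Fin N → ℝ,
      sh12 N (R γ (lam₁ - lam₂)) x γ * sh13 N (R γ (lam₁ - lam₃)) x (-γ) *
        sh23 N (R γ (lam₂ - lam₃)) x γ =
      sh23 N (R γ (lam₂ - lam₃)) x (-γ) * sh13 N (R γ (lam₁ - lam₃)) x γ *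
        sh12 N (R γ (lam₁ - lam₂)) x (-γ)) :
    ∀ lam₁ lam₂ lam₃ : ℂ,
      lam₁ - lam₂ ∈ Λ → lam₁ - lam₃ ∈ Λ → lam₂ - lam₃ ∈ Λ → ∀ x : Fin N → ℝ,
      mcomm (pl12 N (rLimit N R (lam₁ - lam₂) x)) (pl13 N (rLimit N R (lam₁ - lam₃) x)) +
      mcomm (pl12 N (rLimit N R (lam₁ - lam₂) x)) (pl23 N (rLimit N R (lam₂ - lam₃) x)) +
      mcomm (pl13 N (rLimit N R (lam₁ - lam₃) x)) (pl23 N (rLimit N R (lam₂ - lam₃) x)) -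
      (∑ ν : Fin N, pl1 N (E N ν ν) * pl23 N (pderivMat N ν (rLimit N R (lam₂ - lam₃)) x)) +
      (∑ ν : Fin N, pl2 N (E N ν ν) * pl13 N (pderivMat N ν (rLimit N R (lam₁ - lam₃)) x)) -
      (∑ ν : Fin N, pl3 N (E N ν ν) * pl12 N (pderivMat N ν (rLimit N R (lam₁ - lam₂)) x)) = 0 := by
  intro lam₁ lam₂ lam₃ h₁₂ h₁₃ h₂₃ x
  have hnhds : Set.Ioo (-ε) ε ∈ 𝓝 (0 : ℝ) := Ioo_mem_nhds (neg_neg_iff_pos.2 hε) hε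
  have hR : ∀ lam ∈ Λ, ∀ a b y,
      ContDiffAt ℝ 2 (fun z : ℝ × (Fin N → ℝ) => R z.1 lam z.2 a b) (0, y) :=
    fun lam hlam a b y => (hC2 lam hlam a b).contDiffAt (prod_mem_nhds hnhds univ_mem)
  obtain ⟨C₁₂, hC₁₂⟩ := exists_hasSecondOrderDerivAt_shift_rLimit (hR _ h₁₂) (hId _ h₁₂) x
  obtain ⟨C₁₃, hC₁₃⟩ := exists_hasSecondOrderDerivAt_shift_rLimit (hR _ h₁₃) (hId _ h₁₃) x
  obtain ⟨C₂₃, hC₂₃⟩ := exists_hasSecondOrderDerivAt_shift_rLimit (hR _ h₂₃) (hId _ h₂₃) x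
  have hLHS := HasEntrywiseSecondOrderDerivAt.mul_mul_of_eq_one
    (hasEntrywiseSecondOrderDerivAt_sh12 (hC₁₂ 1)) (hasEntrywiseSecondOrderDerivAt_sh13 (hC₁₃ (-1)))
    (hasEntrywiseSecondOrderDerivAt_sh23 (hC₂₃ 1)) (sh12_eq_one (hId _ h₁₂) _ _)
    (sh13_eq_one (hId _ h₁₃) _ _) (sh23_eq_one (hId _ h₂₃) _ _)
  have hRHS := HasEntrywiseSecondOrderDerivAt.mul_mul_of_eq_one
    (hasEntrywiseSecondOrderDerivAt_sh23 (hC₂₃ (-1))) (hasEntrywiseSecondOrderDerivAt_sh13 (hC₁₃ 1))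
    (hasEntrywiseSecondOrderDerivAt_sh12 (hC₁₂ (-1))) (sh23_eq_one (hId _ h₂₃) _ _)
    (sh13_eq_one (hId _ h₁₃) _ _) (sh12_eq_one (hId _ h₁₂) _ _)
  have h := hLHS.snd_unique hRHS <| by
    filter_upwards [hnhds] with γ hγ
    simpa only [one_mul, neg_one_mul] using hGNF γ hγ _ _ _ h₁₂ h₁₃ h₂₃ x
  simp only [ofReal_one, ofReal_neg, mul_one, mul_neg, neg_neg, pl12_smul,
    pl13_smul, pl23_smul] at h
  simpa only [mcomm] using gcybe_of_gnf_second_order h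

end
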